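/- arXiv:1605.05713 — 2 statements merged into one kernel-verified Lean document; each statement's English description precedes it below -/
import Mathlib

section
/- Let n be even, k ≥ 3, and suppose all component functions g₀,…,g_{2^{k−1}−1} of f : 𝔽₂ⁿ → ℤ_{2^k} are bent. Fix u ∈ 𝔽₂ⁿ. Then there exist r ∈ {0,…,2^{k−1}−1} and a sign ε ∈ {1,−1} with W_{g_j}(u) = ε·2^{n/2}·(−1)^{z_r·z_j} for all j, if and only if for any four pairwise distinct integers j, c, l, v ∈ {0,…,2^{k−1}−1} with z_j ⊕ z_c ⊕ z_l ⊕ z_v = 0 one has W_{g_j}(u)·W_{g_c}(u) = W_{g_l}(u)·W_{g_v}(u). -/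
open Finset

/-- Boolean functions on `𝔽₂ⁿ`. -/
abbrev BF (n : ℕ) := (Fin n → ZMod 2) → ZMod 2

/-- Dot product on `𝔽₂ⁿ`. -/
def bdot {n : ℕ} (u x : Fin n → ZMod 2) : ZMod 2 := ∑ i, u i * x i

/-- Walsh–Hadamard transform of a Boolean function. -/
def walsh {n : ℕ} (g : BF n) (u : Fin n → ZMod 2) : ℤ :=
  ∑ x : Fin n → ZMod 2, (-1 : ℤ) ^ (g x + bdot u x).val

/-- Generalized Walsh–Hadamard transform of `f : 𝔽₂ⁿ → ℤ_q`. -/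
noncomputable def gwht {n q : ℕ} (f : (Fin n → ZMod 2) → ZMod q) (u : Fin n → ZMod 2) : ℂ :=
  ∑ x : Fin n → ZMod 2,
    Complex.exp (2 * Real.pi * Complex.I / (q : ℂ)) ^ (f x).val * (-1 : ℂ) ^ (bdot u x).val

/-- `f : 𝔽₂ⁿ → ℤ_q` is gbent if `|H_f(u)| = 2^{n/2}` for all `u`. -/
def IsGbent {n q : ℕ} (f : (Fin n → ZMod 2) → ZMod q) : Prop :=
  ∀ u, ‖gwht f u‖ = (2 : ℝ) ^ ((n : ℝ) / 2)

/-- A Boolean function (in an even number `n` of variables) is bent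
if `|W_g(u)| = 2^{n/2}` for all `u`. -/
def IsBent {n : ℕ} (g : BF n) : Prop := ∀ u, |walsh g u| = 2 ^ (n / 2)

/-- A Boolean function (in an odd number `n` of variables) is semi-bent if
`W_g(u) ∈ {0, ±2^{(n+1)/2}}` for all `u`. -/
def IsSemiBent {n : ℕ} (g : BF n) : Prop :=
  ∀ u, walsh g u = 0 ∨ walsh g u = 2 ^ ((n + 1) / 2) ∨ walsh g u = -2 ^ ((n + 1) / 2)

/-- `gd` is the dual of the bent function `g`: `W_g(u) = 2^{n/2}(-1)^{gd(u)}`. -/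
def IsDual {n : ℕ} (g gd : BF n) : Prop :=
  ∀ u, walsh g u = 2 ^ (n / 2) * (-1 : ℤ) ^ (gd u).val

/-- The `t`-th binary digit of `j`, as an element of `𝔽₂`. -/
def bit (t j : ℕ) : ZMod 2 := if Nat.testBit j t then 1 else 0

/-- Dot product `z_r · z_j` of the binary representations (of length `m`) of `r` and `j`. -/
def zdot (m r j : ℕ) : ZMod 2 := ∑ t ∈ Finset.range m, bit t r * bit t j

/-- Entry `(r, j)` of the Sylvester–Hadamard matrix `H_{2^m}`, i.e. `(-1)^{z_r · z_j}`. -/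
def hadRow (m r j : ℕ) : ℤ := (-1 : ℤ) ^ (zdot m r j).val

/-- `a 0, …, a (k-1)` are the Boolean coordinate functions of `f : 𝔽₂ⁿ → ℤ_{2^k}`:
`f = a₀ + 2a₁ + ⋯ + 2^{k-1}a_{k-1}`. -/
def coordExpand {n : ℕ} (k : ℕ) (a : ℕ → BF n) (f : (Fin n → ZMod 2) → ZMod (2 ^ k)) : Prop :=
  ∀ x, f x = ∑ j ∈ Finset.range k, (2 : ZMod (2 ^ k)) ^ j * ((a j x).val : ZMod (2 ^ k))

/-- The `i`-th component function `g_i = a_{k-1} ⊕ i₀a₀ ⊕ ⋯ ⊕ i_{k-2}a_{k-2}`. -/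
def component {n : ℕ} (k : ℕ) (a : ℕ → BF n) (i : ℕ) : BF n :=
  fun x => a (k - 1) x + ∑ t ∈ Finset.range (k - 1), bit t i * a t x

/-- The affine space `a0 ⊕ ⟨a 0, …, a (m-1)⟩` of Boolean functions. -/
def affSpan {n : ℕ} (m : ℕ) (a0 : BF n) (a : ℕ → BF n) : Set (BF n) :=
  {g | ∃ c : ℕ → ZMod 2, g = fun x => a0 x + ∑ t ∈ Finset.range m, c t * a t x}

/-- Walsh–Hadamard transform for Boolean functions on `𝔽₂ⁿ × 𝔽₂^m`. -/
def walshP {n m : ℕ} (F : (Fin n → ZMod 2) → (Fin m → ZMod 2) → ZMod 2)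
    (u : Fin n → ZMod 2) (v : Fin m → ZMod 2) : ℤ :=
  ∑ x : Fin n → ZMod 2, ∑ y : Fin m → ZMod 2, (-1 : ℤ) ^ (F x y + bdot u x + bdot v y).val

/-! Write each Walsh value as `2^{n/2} (-1)^{b_j}` with `b_j ∈ 𝔽₂`. For nonzero `j ≠ c`, the
quadruple `j, c, 0, j ⊕ c` shows that `j ↦ b_j - b_0` is additive for `⊕` on `{0, …, 2^{k-1} - 1}`,
hence determined by its values at the powers of two: it is `j ↦ z_r · z_j` for the `r` whose binary
digits are these values. Conversely `j ↦ (-1)^{z_r · z_j}` is a character of `⊕`, and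
`j ⊕ c ⊕ l ⊕ v = 0` means `j ⊕ c = l ⊕ v`. -/

lemma negOnePow_val_add (x y : ZMod 2) :
    (-1 : ℤ) ^ (x + y).val = (-1) ^ x.val * (-1) ^ y.val := by
  revert x y; decide

lemma negOnePow_val_injective : Function.Injective fun x : ZMod 2 => (-1 : ℤ) ^ x.val := by
  decide

lemma exists_eq_mul_negOnePow_of_abs_eq {w P : ℤ} (hP : 0 ≤ P) (h : |w| = P) :
    ∃ x : ZMod 2, w = P * (-1) ^ x.val := by
  rcases (abs_eq hP).mp h with rfl | rfl
  · exact ⟨0, by simp⟩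
  · exact ⟨1, by simp [ZMod.val_one]⟩

lemma bit_xor (t j c : ℕ) : bit t (j ^^^ c) = bit t j + bit t c := by
  unfold bit
  rw [Nat.testBit_xor]
  cases j.testBit t <;> cases c.testBit t <;> decide

lemma bit_of_lt_two_pow {M x : ℕ} (hx : x < 2 ^ M) : bit M x = 0 := by
  simp [bit, Nat.testBit_lt_two_pow hx]

lemma bit_two_pow_add_self {M x : ℕ} (hx : x < 2 ^ M) : bit M (2 ^ M + x) = 1 := by
  simp [bit, Nat.testBit_two_pow_add_eq, Nat.testBit_lt_two_pow hx]

lemma bit_two_pow_add_of_lt {M t : ℕ} (ht : t < M) (x : ℕ) : bit t (2 ^ M + x) = bit t x := by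
  simp [bit, Nat.testBit_two_pow_add_gt ht]

lemma two_pow_add_eq_xor {M x : ℕ} (hx : x < 2 ^ M) : 2 ^ M + x = 2 ^ M ^^^ x := by
  apply Nat.eq_of_testBit_eq
  intro t
  rw [Nat.testBit_xor, Nat.testBit_two_pow]
  rcases lt_trichotomy t M with ht | rfl | ht
  · simp [Nat.testBit_two_pow_add_gt ht, ht.ne']
  · simp [Nat.testBit_two_pow_add_eq]
  · have hlt : 2 ^ M + x < 2 ^ t :=
      lt_of_lt_of_le (by rw [pow_succ]; omega) (Nat.pow_le_pow_right two_pos ht)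
    have hxt : x < 2 ^ t := hx.trans (Nat.pow_lt_pow_right one_lt_two ht)
    simp [Nat.testBit_lt_two_pow hlt, Nat.testBit_lt_two_pow hxt, ht.ne]

lemma zdot_xor (m r j c : ℕ) : zdot m r (j ^^^ c) = zdot m r j + zdot m r c := by
  simp only [zdot, bit_xor, mul_add, sum_add_distrib]

lemma hadRow_xor (m r j c : ℕ) : hadRow m r (j ^^^ c) = hadRow m r j * hadRow m r c := by
  simp only [hadRow, zdot_xor, negOnePow_val_add]

lemma exists_lt_two_pow_bit_eq (M : ℕ) (d : ℕ → ZMod 2) :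
    ∃ r < 2 ^ M, ∀ t < M, bit t r = d t := by
  induction M with
  | zero => exact ⟨0, by simp, by simp⟩
  | succ M ih =>
    obtain ⟨r, hr, hbits⟩ := ih
    have hsucc : (2 : ℕ) ^ (M + 1) = 2 ^ M + 2 ^ M := by ring
    have hlow : ∀ r', (∀ t < M, bit t r' = bit t r) → bit M r' = d M →
        ∀ t < M + 1, bit t r' = d t := by
      intro r' hagree htop t ht
      rcases Nat.lt_succ_iff_lt_or_eq.mp ht with ht | rfl
      · rw [hagree t ht, hbits t ht]
      · exact htop
    rcases (by decide : ∀ x : ZMod 2, x = 0 ∨ x = 1) (d M) with hd | hd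
    · exact ⟨r, by omega, hlow r (fun _ _ => rfl) (by rw [hd, bit_of_lt_two_pow hr])⟩
    · exact ⟨2 ^ M + r, by omega, hlow _ (fun t ht => bit_two_pow_add_of_lt ht r)
        (by rw [hd, bit_two_pow_add_self hr])⟩

lemma eq_sum_bit_mul_of_xor_additive {m : ℕ} {L : ℕ → ZMod 2}
    (hL : ∀ j < 2 ^ m, ∀ c < 2 ^ m, L (j ^^^ c) = L j + L c) {j : ℕ} (hj : j < 2 ^ m) :
    L j = ∑ t ∈ range m, bit t j * L (2 ^ t) := by
  induction m generalizing j with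
  | zero =>
    obtain rfl : j = 0 := by simpa using hj
    simpa using hL 0 (by simp) 0 (by simp)
  | succ m ih =>
    have hpow : 2 ^ m < 2 ^ (m + 1) := Nat.pow_lt_pow_right one_lt_two m.lt_succ_self
    have hL' : ∀ j < 2 ^ m, ∀ c < 2 ^ m, L (j ^^^ c) = L j + L c := fun j hj c hc =>
      hL j (hj.trans hpow) c (hc.trans hpow)
    rw [sum_range_succ]
    rcases lt_or_ge j (2 ^ m) with hjm | hjm
    · rw [ih hL' hjm, bit_of_lt_two_pow hjm, zero_mul, add_zero]
    · obtain ⟨x, rfl⟩ := Nat.exists_eq_add_of_le hjm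
      have hx : x < 2 ^ m := by rw [pow_succ] at hj; omega
      have hsplit : L (2 ^ m + x) = L (2 ^ m) + L x := by
        rw [two_pow_add_eq_xor hx]
        exact hL _ hpow _ (hx.trans hpow)
      rw [hsplit, bit_two_pow_add_self hx, one_mul, ih hL' hx, add_comm]
      exact congrArg (· + _) (sum_congr rfl fun t ht =>
        by rw [bit_two_pow_add_of_lt (mem_range.mp ht)])

lemma exists_eq_zdot_of_xor_additive {m : ℕ} {L : ℕ → ZMod 2}
    (hL : ∀ j < 2 ^ m, ∀ c < 2 ^ m, L (j ^^^ c) = L j + L c) :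
    ∃ r < 2 ^ m, ∀ j < 2 ^ m, L j = zdot m r j := by
  obtain ⟨r, hr, hbits⟩ := exists_lt_two_pow_bit_eq m fun t => L (2 ^ t)
  refine ⟨r, hr, fun j hj => ?_⟩
  rw [eq_sum_bit_mul_of_xor_additive hL hj, zdot]
  exact sum_congr rfl fun t ht => by rw [hbits t (mem_range.mp ht), mul_comm]

lemma exists_eq_add_zdot_of_quadruples {m : ℕ} {b : ℕ → ZMod 2}
    (hb : ∀ j < 2 ^ m, ∀ c < 2 ^ m, ∀ l < 2 ^ m, ∀ v < 2 ^ m,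
      j ≠ c → j ≠ l → j ≠ v → c ≠ l → c ≠ v → l ≠ v → j ^^^ c ^^^ l ^^^ v = 0 →
        b j + b c = b l + b v) :
    ∃ r < 2 ^ m, ∀ j < 2 ^ m, b j = b 0 + zdot m r j := by
  have hadd : ∀ j < 2 ^ m, ∀ c < 2 ^ m,
      b (j ^^^ c) - b 0 = (b j - b 0) + (b c - b 0) := by
    intro j hj c hc
    rcases eq_or_ne j 0 with rfl | hj0
    · simp
    rcases eq_or_ne c 0 with rfl | hc0
    · simp
    rcases eq_or_ne j c with rfl | hjc
    · simp [CharTwo.add_self_eq_zero]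
    have h := hb j hj c hc 0 (Nat.two_pow_pos m) (j ^^^ c) (Nat.xor_lt_two_pow hj hc) hjc hj0
      (by rwa [Ne, ← Nat.xor_eq_zero_iff, Nat.xor_xor_cancel_left]) hc0
      (by rwa [Ne, ← Nat.xor_eq_zero_iff, Nat.xor_comm j, Nat.xor_xor_cancel_left])
      (by rwa [ne_comm, Nat.xor_ne_zero_iff]) (by simp)
    grind
  obtain ⟨r, hr, hL⟩ := exists_eq_zdot_of_xor_additive (L := fun j => b j - b 0) hadd
  exact ⟨r, hr, fun j hj => by rw [← hL j hj]; ring⟩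

lemma mul_eq_mul_of_eq_hadRow {m r : ℕ} {ε P : ℤ} {w : ℕ → ℤ}
    (hw : ∀ j < 2 ^ m, w j = ε * P * hadRow m r j) {j c l v : ℕ} (hj : j < 2 ^ m)
    (hc : c < 2 ^ m) (hl : l < 2 ^ m) (hv : v < 2 ^ m) (h : j ^^^ c ^^^ l ^^^ v = 0) :
    w j * w c = w l * w v := by
  have hxor : j ^^^ c = l ^^^ v := by
    rwa [Nat.xor_assoc, Nat.xor_eq_zero_iff] at h
  have hrow : hadRow m r j * hadRow m r c = hadRow m r l * hadRow m r v := by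
    rw [← hadRow_xor, ← hadRow_xor, hxor]
  rw [hw j hj, hw c hc, hw l hl, hw v hv]
  linear_combination (ε * P) ^ 2 * hrow

lemma exists_eq_hadRow_of_quadruples {m : ℕ} {P : ℤ} {w : ℕ → ℤ} (hP : 0 < P)
    (hw : ∀ j < 2 ^ m, |w j| = P)
    (hq : ∀ j < 2 ^ m, ∀ c < 2 ^ m, ∀ l < 2 ^ m, ∀ v < 2 ^ m,
      j ≠ c → j ≠ l → j ≠ v → c ≠ l → c ≠ v → l ≠ v → j ^^^ c ^^^ l ^^^ v = 0 →
        w j * w c = w l * w v) :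
    ∃ r < 2 ^ m, ∃ ε : ℤ, (ε = 1 ∨ ε = -1) ∧ ∀ j < 2 ^ m, w j = ε * P * hadRow m r j := by
  have hsign : ∀ j, ∃ x : ZMod 2, j < 2 ^ m → w j = P * (-1) ^ x.val := fun j => by
    by_cases hj : j < 2 ^ m
    · obtain ⟨x, hx⟩ := exists_eq_mul_negOnePow_of_abs_eq hP.le (hw j hj)
      exact ⟨x, fun _ => hx⟩
    · exact ⟨0, fun h => absurd h hj⟩
  choose b hb using hsign
  have hbq : ∀ j < 2 ^ m, ∀ c < 2 ^ m, ∀ l < 2 ^ m, ∀ v < 2 ^ m,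
      j ≠ c → j ≠ l → j ≠ v → c ≠ l → c ≠ v → l ≠ v → j ^^^ c ^^^ l ^^^ v = 0 →
        b j + b c = b l + b v := by
    intro j hj c hc l hl v hv hjc hjl hjv hcl hcv hlv h
    have hw4 := hq j hj c hc l hl v hv hjc hjl hjv hcl hcv hlv h
    rw [hb j hj, hb c hc, hb l hl, hb v hv] at hw4
    apply negOnePow_val_injective
    simp only [negOnePow_val_add]
    exact mul_left_cancel₀ (pow_ne_zero 2 hP.ne') (by linear_combination hw4)
  obtain ⟨r, hr, hbr⟩ := exists_eq_add_zdot_of_quadruples hbq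
  refine ⟨r, hr, (-1) ^ (b 0).val, neg_one_pow_eq_or ℤ _, fun j hj => ?_⟩
  rw [hb j hj, hbr j hj, negOnePow_val_add, hadRow]
  ring

theorem hadamard_row_iff_walsh_quadruples_even_general (n k : ℕ) (a : ℕ → BF n)
    (hbent : ∀ i < 2 ^ (k - 1), IsBent (component k a i)) (u : Fin n → ZMod 2) :
    (∃ r < 2 ^ (k - 1), ∃ ε : ℤ, (ε = 1 ∨ ε = -1) ∧
        ∀ j < 2 ^ (k - 1),
          walsh (component k a j) u = ε * 2 ^ (n / 2) * hadRow (k - 1) r j) ↔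
      (∀ j < 2 ^ (k - 1), ∀ c < 2 ^ (k - 1), ∀ l < 2 ^ (k - 1), ∀ v < 2 ^ (k - 1),
        j ≠ c → j ≠ l → j ≠ v → c ≠ l → c ≠ v → l ≠ v → j ^^^ c ^^^ l ^^^ v = 0 →
        walsh (component k a j) u * walsh (component k a c) u =
          walsh (component k a l) u * walsh (component k a v) u) := by
  refine ⟨fun ⟨r, _, ε, _, hrow⟩ => ?_,
    exists_eq_hadRow_of_quadruples (by positivity) fun j hj => hbent j hj u⟩
  intro j hj c hc l hl v hv _ _ _ _ _ _ hxor
  exact mul_eq_mul_of_eq_hadRow hrow hj hc hl hv hxor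

/-- Proposition 2(i): for even `n` and bent component functions, the Walsh spectrum vector at `u`
is `± 2^{n/2}` times a Hadamard row iff the quadruple condition
`W_{g_j}(u) W_{g_c}(u) = W_{g_l}(u) W_{g_v}(u)` holds. -/
theorem hadamard_row_iff_walsh_quadruples_even (n k : ℕ) (hn : Even n) (hk : 3 ≤ k)
    (a : ℕ → BF n) (f : (Fin n → ZMod 2) → ZMod (2 ^ k)) (hf : coordExpand k a f)
    (hbent : ∀ i < 2 ^ (k - 1), IsBent (component k a i)) (u : Fin n → ZMod 2) :
    (∃ r < 2 ^ (k - 1), ∃ ε : ℤ, (ε = 1 ∨ ε = -1) ∧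
        ∀ j < 2 ^ (k - 1),
          walsh (component k a j) u = ε * 2 ^ (n / 2) * hadRow (k - 1) r j) ↔
      (∀ j < 2 ^ (k - 1), ∀ c < 2 ^ (k - 1), ∀ l < 2 ^ (k - 1), ∀ v < 2 ^ (k - 1),
        j ≠ c → j ≠ l → j ≠ v → c ≠ l → c ≠ v → l ≠ v → j ^^^ c ^^^ l ^^^ v = 0 →
        walsh (component k a j) u * walsh (component k a c) u =
          walsh (component k a l) u * walsh (component k a v) u) :=
  hadamard_row_iff_walsh_quadruples_even_general n k a hbent u
end

section
/- Let g₀, g₁, g₂, g₃ : 𝔽₂ⁿ → 𝔽₂ be Boolean functions with g₀ ⊕ g₁ ⊕ g₂ ⊕ g₃ = 0, and let g = g₀g₁ ⊕ g₀g₂ ⊕ g₁g₂. Then for all u ∈ 𝔽₂ⁿ, W_g(u) = (1/2)·(W_{g₀}(u) + W_{g₁}(u) + W_{g₂}(u) − W_{g₃}(u)). -/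
open Finset

/-! Over `𝔽₂` the majority `ab ⊕ ac ⊕ bc` takes the value shared by at least two of `a, b, c`,
so its sign `(-1)^maj` is half of `(-1)^a + (-1)^b + (-1)^c - (-1)^(a ⊕ b ⊕ c)` (check the eight
cases). Since `(-1)^(g(x) ⊕ u·x) = (-1)^g(x) (-1)^(u·x)`, summing this pointwise identity over `x`
gives the Walsh identity, with `g₃ = g₀ ⊕ g₁ ⊕ g₂` in characteristic two. -/

lemma neg_one_pow_val_add (a b : ZMod 2) :
    (-1 : ℤ) ^ (a + b).val = (-1) ^ a.val * (-1) ^ b.val := by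
  revert a b
  decide

lemma two_mul_neg_one_pow_majority (a b c : ZMod 2) :
    2 * (-1 : ℤ) ^ (a * b + a * c + b * c).val =
      (-1) ^ a.val + (-1) ^ b.val + (-1) ^ c.val - (-1) ^ (a + b + c).val := by
  revert a b c
  decide

lemma walsh_eq_sum_mul {n : ℕ} (g : BF n) (u : Fin n → ZMod 2) :
    walsh g u = ∑ x, (-1 : ℤ) ^ (g x).val * (-1) ^ (bdot u x).val := by
  simp only [walsh, neg_one_pow_val_add]

lemma two_mul_walsh_majority {n : ℕ} (g₀ g₁ g₂ : BF n) (u : Fin n → ZMod 2) :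
    2 * walsh (fun x => g₀ x * g₁ x + g₀ x * g₂ x + g₁ x * g₂ x) u =
      walsh g₀ u + walsh g₁ u + walsh g₂ u - walsh (fun x => g₀ x + g₁ x + g₂ x) u := by
  simp only [walsh_eq_sum_mul, mul_sum, ← sum_add_distrib, ← sum_sub_distrib]
  refine sum_congr rfl fun x _ => ?_
  rw [← mul_assoc, two_mul_neg_one_pow_majority]
  ring

/-- Carlet's lemma: if `g₀ ⊕ g₁ ⊕ g₂ ⊕ g₃ = 0` and `g = g₀g₁ ⊕ g₀g₂ ⊕ g₁g₂`, then
`W_g(u) = (W_{g₀}(u) + W_{g₁}(u) + W_{g₂}(u) − W_{g₃}(u))/2`. -/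
theorem walsh_of_majority_combination (n : ℕ) (g₀ g₁ g₂ g₃ : BF n)
    (hsum : ∀ x, g₀ x + g₁ x + g₂ x + g₃ x = 0) (u : Fin n → ZMod 2) :
    (walsh (fun x => g₀ x * g₁ x + g₀ x * g₂ x + g₁ x * g₂ x) u : ℚ) =
      ((walsh g₀ u : ℚ) + (walsh g₁ u : ℚ) + (walsh g₂ u : ℚ) - (walsh g₃ u : ℚ)) / 2 := by
  have hg₃ : g₃ = fun x => g₀ x + g₁ x + g₂ x := funext fun x => by
    rw [eq_neg_of_add_eq_zero_right (hsum x), ZMod.neg_eq_self_mod_two]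
  rw [eq_div_iff two_ne_zero, hg₃, mul_comm]
  exact_mod_cast two_mul_walsh_majority g₀ g₁ g₂ u
end
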